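/- arXiv:math/9805124 — 3 statements merged into one kernel-verified Lean document; each statement's English description precedes it below -/
import Mathlib

section
/- Let 1 ≤ p < ∞ and let T be a bounded linear operator on the real Banach space ℓ^p. Suppose there exists a bounded linear operator M on ℓ^p whose matrix is the entrywise absolute value of the matrix of T, i.e. for all indices i, j one has (M f_j)_i = |(T f_j)_i|, where (f_j) denotes the sequence of standard unit vectors (so M is the modulus of T). If M is quasinilpotent (its spectral radius is 0), then T admits a nontrivial closed invariant ideal: a closed linear subspace J of ℓ^p with J ≠ {0}, J ≠ ℓ^p, T(J) ⊆ J, and which is solid, meaning that if x ∈ J and y ∈ ℓ^p satisfy |y_i| ≤ |x_i| for all i, then y ∈ J. -/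
/-!
Let `m_{ij} = |t_{ij}| ≥ 0` be the matrix of `M`, and say that `i` is reachable from `j` when
`(M^n)_{ij} > 0` for some `n ≥ 0`. If some `i` is not reachable from some `j`, let `S` be the set
of indices reachable from `j`: then `m_{kl} = 0`, hence `t_{kl} = 0`, for `l ∈ S` and `k ∉ S`, so
the band `{x | x_k = 0 for k ∉ S}` is a closed ideal invariant under `T`, containing `f_j` but not
`f_i`. Otherwise `0` and `1` reach each other, so `c = (M^m)_{00} > 0` for some `m > 0`. Since the
entries are nonnegative, `(M^{km})_{00} ≥ c^k`, hence `‖M^{km}‖^{1/(km)} ≥ c^{1/m}` for all `k ≥ 1`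
and `M` is not quasinilpotent.
-/

open Filter Topology ENNReal

lemma not_tendsto_rpow_one_div_zero_of_pow_le {u : ℕ → ℝ} {c : ℝ} {m : ℕ} (hc : 0 < c)
    (hm : 0 < m) (hu : ∀ k, c ^ k ≤ u (k * m)) :
    ¬ Tendsto (fun n : ℕ => u n ^ (1 / (n : ℝ))) atTop (𝓝 0) := by
  intro h
  have hkm : Tendsto (fun k : ℕ => k * m) atTop atTop := tendsto_id.atTop_mul_const' hm
  refine (Real.rpow_pos_of_pos hc (1 / m)).not_ge (ge_of_tendsto (h.comp hkm) ?_)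
  filter_upwards [eventually_ne_atTop 0] with k hk
  calc c ^ (1 / (m : ℝ)) = (c ^ k) ^ (1 / ((k * m : ℕ) : ℝ)) := by
        rw [← Real.rpow_natCast, ← Real.rpow_mul hc.le]
        congr 1
        push_cast
        field_simp
    _ ≤ u (k * m) ^ (1 / ((k * m : ℕ) : ℝ)) :=
        Real.rpow_le_rpow (by positivity) (hu k) (by positivity)

namespace lp

variable {ι : Type*} {p : ℝ≥0∞}

local notation "ℓᵖ" => lp (fun _ : ι => ℝ) p

variable (p) in
def band (S : Set ι) : Submodule ℝ ℓᵖ where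
  carrier := {x | ∀ k ∉ S, x k = 0}
  add_mem' hx hy k hk := by simp [hx k hk, hy k hk]
  zero_mem' _ _ := rfl
  smul_mem' c x hx k hk := by simp [hx k hk]

lemma isClosed_band [Fact (1 ≤ p)] (S : Set ι) : IsClosed (band p S : Set ℓᵖ) := by
  simp only [band, Submodule.coe_set_mk, AddSubmonoid.coe_set_mk, Set.ofPred_forall]
  exact isClosed_iInter fun k => isClosed_iInter fun _ =>
    isClosed_eq (lipschitzWith_one_eval p k).continuous continuous_const

lemma mem_band_of_abs_le {S : Set ι} {x y : ℓᵖ} (hx : x ∈ band p S) (hy : ∀ i, |y i| ≤ |x i|) :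
    y ∈ band p S := fun k hk => abs_nonpos_iff.mp <| (hy k).trans_eq <| by rw [hx k hk, abs_zero]

lemma band_ne_bot {S : Set ι} (hS : S.Nonempty) : band p S ≠ ⊥ := by
  classical
  obtain ⟨j, hj⟩ := hS
  refine (Submodule.ne_bot_iff _).2 ⟨lp.single p j 1, fun k hk => ?_, fun h => ?_⟩
  · exact lp.single_apply_ne p j _ (ne_of_mem_of_not_mem hj hk).symm
  · simpa using congrArg (· j) h

lemma band_ne_top {S : Set ι} (hS : S ≠ Set.univ) : band p S ≠ ⊤ := by
  classical
  obtain ⟨i, hi⟩ := Set.ne_univ_iff_exists_notMem S |>.1 hS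
  intro h
  have := (h ▸ Submodule.mem_top : lp.single p i (1 : ℝ) ∈ band p S) i hi
  simp at this

variable [DecidableEq ι] [Fact (1 ≤ p)]

lemma hasSum_apply (hp : p ≠ ∞) (A : ℓᵖ →L[ℝ] ℓᵖ) (x : ℓᵖ) (k : ι) :
    HasSum (fun l => x l * A (lp.single p l 1) k) (A x k) := by
  have := ((lp.evalCLM ℝ (fun _ : ι => ℝ) p k).comp A).hasSum (lp.hasSum_single hp x)
  change HasSum (fun l => A (lp.single p l (x l)) k) (A x k) at this
  have hsingle : ∀ l, lp.single p l (x l) = x l • (lp.single p l 1 : ℓᵖ) := fun l => by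
    rw [← lp.single_smul, smul_eq_mul, mul_one]
  simpa only [hsingle, map_smul, lp.coeFn_smul, Pi.smul_apply, smul_eq_mul] using this

lemma apply_mem_band (hp : p ≠ ∞) {A : ℓᵖ →L[ℝ] ℓᵖ} {S : Set ι}
    (hA : ∀ k ∉ S, ∀ l ∈ S, A (lp.single p l 1) k = 0) {x : ℓᵖ} (hx : x ∈ band p S) :
    A x ∈ band p S := by
  intro k hk
  refine (hasSum_apply hp A x k).unique (hasSum_zero.congr_fun fun l => ?_)
  by_cases hl : l ∈ S
  · rw [hA k hk l hl, mul_zero]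
  · rw [hx l hl, zero_mul]

variable (p) in
def HasNonnegEntries (A : ℓᵖ →L[ℝ] ℓᵖ) : Prop :=
  ∀ k l, 0 ≤ A (lp.single p l 1) k

lemma HasNonnegEntries.apply_nonneg {A : ℓᵖ →L[ℝ] ℓᵖ} (hA : HasNonnegEntries p A)
    (hp : p ≠ ∞) {x : ℓᵖ} (hx : ∀ l, 0 ≤ x l) (k : ι) : 0 ≤ A x k :=
  (hasSum_apply hp A x k).nonneg fun l => mul_nonneg (hx l) (hA k l)

lemma HasNonnegEntries.mul_le_apply {A : ℓᵖ →L[ℝ] ℓᵖ} (hA : HasNonnegEntries p A)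
    (hp : p ≠ ∞) {x : ℓᵖ} (hx : ∀ l, 0 ≤ x l) (k l : ι) : x l * A (lp.single p l 1) k ≤ A x k :=
  le_hasSum (hasSum_apply hp A x k) l fun m _ => mul_nonneg (hx m) (hA k m)

lemma HasNonnegEntries.pow {A : ℓᵖ →L[ℝ] ℓᵖ} (hA : HasNonnegEntries p A) (hp : p ≠ ∞) (n : ℕ) :
    HasNonnegEntries p (A ^ n) := by
  induction n with
  | zero => intro k l; by_cases h : k = l <;> simp [h, lp.single_apply]
  | succ n ih =>
    intro k l
    rw [pow_succ', mul_apply_eq_comp]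
    exact hA.apply_nonneg hp (ih · l) k

lemma HasNonnegEntries.pow_mul_pow_le {A : ℓᵖ →L[ℝ] ℓᵖ} (hA : HasNonnegEntries p A)
    (hp : p ≠ ∞) (m n : ℕ) (i j k : ι) :
    (A ^ m) (lp.single p j 1) i * (A ^ n) (lp.single p i 1) k ≤
      (A ^ (n + m)) (lp.single p j 1) k := by
  rw [pow_add, mul_apply_eq_comp]
  exact (hA.pow hp n).mul_le_apply hp (hA.pow hp m · j) k i

lemma HasNonnegEntries.diag_pow_le_pow_mul {A : ℓᵖ →L[ℝ] ℓᵖ} (hA : HasNonnegEntries p A)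
    (hp : p ≠ ∞) (m k : ℕ) (i : ι) :
    ((A ^ m) (lp.single p i 1) i) ^ k ≤ (A ^ (k * m)) (lp.single p i 1) i := by
  induction k with
  | zero => simp
  | succ k ih =>
    calc ((A ^ m) (lp.single p i 1) i) ^ (k + 1)
        = (A ^ m) (lp.single p i 1) i * ((A ^ m) (lp.single p i 1) i) ^ k := pow_succ' _ _
      _ ≤ (A ^ m) (lp.single p i 1) i * (A ^ (k * m)) (lp.single p i 1) i :=
        mul_le_mul_of_nonneg_left ih (hA.pow hp m i i)
      _ ≤ (A ^ ((k + 1) * m)) (lp.single p i 1) i := by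
        rw [add_one_mul]; exact hA.pow_mul_pow_le hp m (k * m) i i i

lemma apply_single_le_opNorm (A : ℓᵖ →L[ℝ] ℓᵖ) (i j : ι) : A (lp.single p j 1) i ≤ ‖A‖ := by
  have hp : 0 < p := zero_lt_one.trans_le Fact.out
  calc A (lp.single p j 1) i ≤ ‖A (lp.single p j 1)‖ :=
        (Real.le_norm_self _).trans (norm_apply_le_norm hp.ne' _ i)
    _ ≤ ‖A‖ * ‖(lp.single p j 1 : ℓᵖ)‖ := A.le_opNorm _
    _ = ‖A‖ := by rw [lp.norm_single hp, norm_one, mul_one]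

variable (p) in
def reachableSet (A : ℓᵖ →L[ℝ] ℓᵖ) (j : ι) : Set ι :=
  {i | ∃ n : ℕ, (A ^ n) (lp.single p j 1) i ≠ 0}

lemma self_mem_reachableSet (A : ℓᵖ →L[ℝ] ℓᵖ) (j : ι) : j ∈ reachableSet p A j :=
  ⟨0, by simp⟩

lemma HasNonnegEntries.apply_single_eq_zero_of_notMem_reachableSet {A : ℓᵖ →L[ℝ] ℓᵖ}
    (hA : HasNonnegEntries p A) (hp : p ≠ ∞) {j k l : ι} (hl : l ∈ reachableSet p A j)
    (hk : k ∉ reachableSet p A j) : A (lp.single p l 1) k = 0 := by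
  obtain ⟨n, hn⟩ := hl
  by_contra hne
  refine hk ⟨n + 1, ((mul_pos ((hA.pow hp n l j).lt_of_ne' hn) ((hA k l).lt_of_ne' hne)).trans_le
    ?_).ne'⟩
  have := hA.pow_mul_pow_le hp n 1 l j k
  rwa [pow_one, add_comm] at this

lemma HasNonnegEntries.exists_pow_apply_single_self_pos {A : ℓᵖ →L[ℝ] ℓᵖ}
    (hA : HasNonnegEntries p A) (hp : p ≠ ∞) {i j : ι} (hij : i ≠ j)
    (hi : i ∈ reachableSet p A j) (hj : j ∈ reachableSet p A i) :
    ∃ m, 0 < m ∧ 0 < (A ^ m) (lp.single p j 1) j := by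
  obtain ⟨n₁, hn₁⟩ := hi
  obtain ⟨n₂, hn₂⟩ := hj
  have hn₂₀ : n₂ ≠ 0 := by
    rintro rfl
    simp [hij.symm] at hn₂
  exact ⟨n₂ + n₁, by omega, (mul_pos ((hA.pow hp n₁ i j).lt_of_ne' hn₁)
    ((hA.pow hp n₂ j i).lt_of_ne' hn₂)).trans_le (hA.pow_mul_pow_le hp n₁ n₂ i j j)⟩

lemma HasNonnegEntries.not_tendsto_norm_pow {A : ℓᵖ →L[ℝ] ℓᵖ}
    (hA : HasNonnegEntries p A) (hp : p ≠ ∞) {m : ℕ} {i : ι} (hm : 0 < m)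
    (hpos : 0 < (A ^ m) (lp.single p i 1) i) :
    ¬ Tendsto (fun n : ℕ => ‖A ^ n‖ ^ (1 / (n : ℝ))) atTop (𝓝 0) :=
  not_tendsto_rpow_one_div_zero_of_pow_le hpos hm fun k =>
    (hA.diag_pow_le_pow_mul hp m k i).trans (apply_single_le_opNorm _ i i)

end lp

/-- If the modulus `M` of a bounded operator `T` on `ℓᵖ` (`1 ≤ p < ∞`) exists
(i.e. the matrix of `M` is the entrywise absolute value of the matrix of `T`)
and `M` is quasinilpotent, then `T` has a nontrivial closed invariant ideal. -/
theorem modulus_quasinilpotent_invariant_ideal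
    (p : ℝ≥0∞) [Fact (1 ≤ p)] (hp : p ≠ ∞)
    (T M : lp (fun _ : ℕ => ℝ) p →L[ℝ] lp (fun _ : ℕ => ℝ) p)
    (hM : ∀ i j : ℕ, M (lp.single p j 1) i = |T (lp.single p j 1) i|)
    (hq : Tendsto (fun n : ℕ => ‖M ^ n‖ ^ (1 / (n : ℝ))) atTop (nhds 0)) :
    ∃ J : Submodule ℝ (lp (fun _ : ℕ => ℝ) p),
      IsClosed (J : Set (lp (fun _ : ℕ => ℝ) p)) ∧ J ≠ ⊥ ∧ J ≠ ⊤ ∧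
      (∀ x ∈ J, T x ∈ J) ∧
      (∀ x ∈ J, ∀ y : lp (fun _ : ℕ => ℝ) p, (∀ i, |y i| ≤ |x i|) → y ∈ J) := by
  have hM₀ : lp.HasNonnegEntries p M := fun k l => (hM k l).symm ▸ abs_nonneg _
  by_cases hred : ∃ i j, i ∉ lp.reachableSet p M j
  · obtain ⟨i, j, hij⟩ := hred
    set S := lp.reachableSet p M j
    have hT : ∀ k ∉ S, ∀ l ∈ S, T (lp.single p l 1) k = 0 := fun k hk l hl =>
      abs_eq_zero.mp <| (hM k l).symm.trans
        (hM₀.apply_single_eq_zero_of_notMem_reachableSet hp hl hk)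
    exact ⟨lp.band p S, lp.isClosed_band S, lp.band_ne_bot ⟨j, lp.self_mem_reachableSet M j⟩,
      lp.band_ne_top fun hS => hij (hS ▸ Set.mem_univ i), fun x hx => lp.apply_mem_band hp hT hx,
      fun x hx y hy => lp.mem_band_of_abs_le hx hy⟩
  · push Not at hred
    obtain ⟨m, hm, hpos⟩ :=
      hM₀.exists_pow_apply_single_self_pos hp one_ne_zero (hred 1 0) (hred 0 1)
    exact absurd hq (hM₀.not_tendsto_norm_pow hp hm hpos)
end

section
/- Let 1 ≤ p < ∞ and let T be a positive bounded linear operator on the real Banach space ℓ^p, i.e. if x_i ≥ 0 for all i then (T x)_i ≥ 0 for all i. If T is quasinilpotent (its spectral radius is 0), then T has a nontrivial closed invariant subspace; in fact, it has a nontrivial closed invariant ideal. -/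
/-!
Write `eⱼ` for the standard unit vectors, so that the matrix entries `(T eⱼ)ₖ` of a positive `T`
are nonnegative, and let `S` be the set of indices reachable from `0` by a path of positive
entries of length at least one. Quasinilpotence forbids returning to `0`: if `(Tᵐ e₀)₀ = c > 0`,
positivity gives `(Tᵐᵏ e₀)₀ ≥ cᵏ`, hence `‖Tᵐᵏ‖^(1/mk) ≥ c^(1/m)` for all `k`. So `S` is a proper
subset of `ℕ`, closed under positive entries, and the sequences supported in `S` form a closed
ideal that `T` maps into itself because every `x ∈ ℓᵖ` is the sum `∑ xⱼ eⱼ`. If `S` is empty,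
then `T e₀ = 0` and the sequences supported in `{0}` do the job.
-/

open Filter Topology ENNReal

theorem not_tendsto_norm_pow_rpow_zero {A : Type*} [SeminormedRing A] {a : A} {c : ℝ}
    (hc : 0 < c) {m : ℕ} (hm : 0 < m) (h : ∀ k : ℕ, c ^ k ≤ ‖a ^ (m * k)‖) :
    ¬Tendsto (fun n : ℕ => ‖a ^ n‖ ^ (1 / (n : ℝ))) atTop (𝓝 0) := by
  intro hq
  have hmk : Tendsto (fun k : ℕ => m * k) atTop atTop :=
    tendsto_atTop_mono (fun k => Nat.le_mul_of_pos_left k hm) tendsto_id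
  refine (Real.rpow_pos_of_pos hc (1 / (m : ℝ))).not_ge
    (ge_of_tendsto (hq.comp hmk) ((eventually_ge_atTop 1).mono fun k hk1 => ?_))
  have hk : (k : ℝ) ≠ 0 := Nat.cast_ne_zero.mpr (Nat.one_le_iff_ne_zero.mp hk1)
  calc c ^ (1 / (m : ℝ)) = (c ^ k) ^ (1 / ((m * k : ℕ) : ℝ)) := by
        rw [← Real.rpow_natCast, ← Real.rpow_mul hc.le]
        congr 1
        push_cast
        field_simp
    _ ≤ ‖a ^ (m * k)‖ ^ (1 / ((m * k : ℕ) : ℝ)) :=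
        Real.rpow_le_rpow (by positivity) (h k) (by positivity)

variable {ι : Type*} {p : ℝ≥0∞}

variable (p) in
def lpSupported (S : Set ι) : Submodule ℝ (lp (fun _ : ι => ℝ) p) where
  carrier := {x | ∀ i ∉ S, x i = 0}
  add_mem' hx hy i hi := by simp [hx i hi, hy i hi]
  zero_mem' _ _ := rfl
  smul_mem' c x hx i hi := by simp [hx i hi]

variable {S : Set ι}

lemma mem_lpSupported_of_abs_le {x y : lp (fun _ : ι => ℝ) p} (hx : x ∈ lpSupported p S)
    (hy : ∀ i, |y i| ≤ |x i|) : y ∈ lpSupported p S :=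
  fun i hi => abs_nonpos_iff.mp ((hy i).trans_eq (by rw [hx i hi, abs_zero]))

lemma isClosed_lpSupported [Fact (1 ≤ p)] (S : Set ι) :
    IsClosed (lpSupported p S : Set (lp (fun _ : ι => ℝ) p)) := by
  simp only [lpSupported, Submodule.coe_set_mk, AddSubmonoid.coe_set_mk,
    AddSubsemigroup.coe_set_mk, Set.ofPred_forall]
  exact isClosed_iInter fun i => isClosed_iInter fun _ =>
    isClosed_eq (lp.evalCLM ℝ (fun _ : ι => ℝ) p i).continuous continuous_const

section basisVec

variable [DecidableEq ι]

variable (p) in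
noncomputable def basisVec (i : ι) : lp (fun _ : ι => ℝ) p := lp.single p i 1

lemma basisVec_apply_self (i : ι) : basisVec p i i = 1 := lp.single_apply_self p i 1

lemma basisVec_apply_of_ne {i j : ι} (h : j ≠ i) : basisVec p i j = 0 :=
  lp.single_apply_ne p i 1 h

lemma basisVec_nonneg (i j : ι) : 0 ≤ basisVec p i j := by
  rcases eq_or_ne j i with rfl | h
  · rw [basisVec_apply_self]; exact zero_le_one
  · rw [basisVec_apply_of_ne h]

lemma lp.single_eq_smul_basisVec (i : ι) (a : ℝ) : lp.single p i a = a • basisVec p i := by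
  rw [basisVec, ← lp.single_smul, smul_eq_mul, mul_one]

lemma basisVec_mem_lpSupported {i : ι} (hi : i ∈ S) : basisVec p i ∈ lpSupported p S :=
  fun _ hk => basisVec_apply_of_ne (ne_of_mem_of_not_mem hi hk).symm

lemma lpSupported_ne_bot {i : ι} (hi : i ∈ S) : lpSupported p S ≠ ⊥ := by
  refine (Submodule.ne_bot_iff _).mpr ⟨_, basisVec_mem_lpSupported hi, fun h => ?_⟩
  simpa [basisVec_apply_self] using congr_arg (fun x : lp (fun _ : ι => ℝ) p => x i) h

lemma lpSupported_ne_top {k : ι} (hk : k ∉ S) : lpSupported p S ≠ ⊤ := fun h => by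
  simpa [basisVec_apply_self] using (h ▸ Submodule.mem_top : basisVec p k ∈ lpSupported p S) k hk

end basisVec

variable [Fact (1 ≤ p)]

def PreservesNonneg (T : lp (fun _ : ι => ℝ) p →L[ℝ] lp (fun _ : ι => ℝ) p) : Prop :=
  ∀ x : lp (fun _ : ι => ℝ) p, (∀ i, 0 ≤ x i) → ∀ i, 0 ≤ T x i

variable {T : lp (fun _ : ι => ℝ) p →L[ℝ] lp (fun _ : ι => ℝ) p}

lemma PreservesNonneg.pow (hT : PreservesNonneg T) (n : ℕ) : PreservesNonneg (T ^ n) := by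
  induction n with
  | zero => intro x hx; simpa using hx
  | succ n ih => intro x hx; rw [pow_succ, mul_apply_eq_comp]; exact ih _ (hT x hx)

variable [DecidableEq ι]

lemma norm_basisVec (i : ι) : ‖basisVec p i‖ = 1 := by
  rw [basisVec, lp.norm_single (zero_lt_one.trans_le Fact.out), norm_one]

lemma apply_basisVec_le_opNorm (B : lp (fun _ : ι => ℝ) p →L[ℝ] lp (fun _ : ι => ℝ) p)
    (i j : ι) : B (basisVec p i) j ≤ ‖B‖ :=
  calc B (basisVec p i) j ≤ ‖B (basisVec p i) j‖ := le_abs_self _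
    _ ≤ ‖B (basisVec p i)‖ := lp.norm_apply_le_norm (zero_lt_one.trans_le Fact.out).ne' _ j
    _ ≤ ‖B‖ * ‖basisVec p i‖ := B.le_opNorm _
    _ = ‖B‖ := by rw [norm_basisVec, mul_one]

/-- Expanding `x = ∑ xⱼ eⱼ`, valid since `p < ∞`. -/
lemma apply_mem_lpSupported (hp : p ≠ ∞) (hS : ∀ j ∈ S, ∀ k ∉ S, T (basisVec p j) k = 0)
    {x : lp (fun _ : ι => ℝ) p} (hx : x ∈ lpSupported p S) : T x ∈ lpSupported p S := by
  intro k hk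
  have hsum := (lp.evalCLM ℝ (fun _ : ι => ℝ) p k).hasSum (T.hasSum (lp.hasSum_single hp x))
  refine hsum.unique ?_
  convert hasSum_zero with j
  by_cases hj : j ∈ S
  · rw [lp.single_eq_smul_basisVec, map_smul, map_smul, smul_eq_mul]
    exact mul_eq_zero_of_right _ (hS j hj k hk)
  · simp [hx j hj]

namespace PreservesNonneg

lemma apply_basisVec_nonneg (hT : PreservesNonneg T) (j k : ι) : 0 ≤ T (basisVec p j) k :=
  hT _ (basisVec_nonneg j) k

lemma apply_basisVec_eq_zero_of_not_pos (hT : PreservesNonneg T) {j k : ι}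
    (h : ¬0 < T (basisVec p j) k) : T (basisVec p j) k = 0 :=
  ((hT.apply_basisVec_nonneg j k).eq_or_lt.resolve_right h).symm

lemma apply_mem_lpSupported (hT : PreservesNonneg T) (hp : p ≠ ∞)
    (hS : ∀ j ∈ S, ∀ k, 0 < T (basisVec p j) k → k ∈ S) {x : lp (fun _ : ι => ℝ) p}
    (hx : x ∈ lpSupported p S) : T x ∈ lpSupported p S :=
  _root_.apply_mem_lpSupported hp
    (fun j hj _ hk => hT.apply_basisVec_eq_zero_of_not_pos fun h => hk (hS j hj _ h)) hx

lemma mul_apply_basisVec_le (hT : PreservesNonneg T) {x : lp (fun _ : ι => ℝ) p}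
    (hx : ∀ i, 0 ≤ x i) (j k : ι) : x j * T (basisVec p j) k ≤ T x k := by
  have hrest : ∀ i, 0 ≤ (x - x j • basisVec p j) i := fun i => by
    rw [lp.coeFn_sub, lp.coeFn_smul, Pi.sub_apply, Pi.smul_apply, smul_eq_mul, sub_nonneg]
    rcases eq_or_ne i j with rfl | hij
    · rw [basisVec_apply_self, mul_one]
    · rw [basisVec_apply_of_ne hij, mul_zero]; exact hx i
  have h := hT _ hrest k
  rwa [map_sub, map_smul, lp.coeFn_sub, lp.coeFn_smul, Pi.sub_apply, Pi.smul_apply, smul_eq_mul,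
    sub_nonneg] at h

lemma pow_le_pow_apply_basisVec (hT : PreservesNonneg T) (i : ι) (k : ℕ) :
    T (basisVec p i) i ^ k ≤ (T ^ k) (basisVec p i) i := by
  induction k with
  | zero => simp [basisVec_apply_self]
  | succ k ih =>
    rw [pow_succ, pow_succ', mul_apply_eq_comp]
    exact (mul_le_mul_of_nonneg_right ih (hT.apply_basisVec_nonneg i i)).trans
      (hT.mul_apply_basisVec_le ((hT.pow k) _ (basisVec_nonneg i)) i i)

lemma pow_apply_basisVec_self_eq_zero (hT : PreservesNonneg T)
    (hq : Tendsto (fun n : ℕ => ‖T ^ n‖ ^ (1 / (n : ℝ))) atTop (𝓝 0)) (i : ι) {m : ℕ}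
    (hm : 0 < m) : (T ^ m) (basisVec p i) i = 0 := by
  refine (hT.pow m).apply_basisVec_eq_zero_of_not_pos fun hc => ?_
  refine not_tendsto_norm_pow_rpow_zero hc hm (fun k => ?_) hq
  rw [pow_mul]
  exact ((hT.pow m).pow_le_pow_apply_basisVec i k).trans (apply_basisVec_le_opNorm _ i i)

end PreservesNonneg

def reachableFrom (T : lp (fun _ : ι => ℝ) p →L[ℝ] lp (fun _ : ι => ℝ) p) (i : ι) : Set ι :=
  {k | ∃ n, 0 < (T ^ (n + 1)) (basisVec p i) k}

lemma mem_reachableFrom_of_pos {i k : ι} (h : 0 < T (basisVec p i) k) :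
    k ∈ reachableFrom T i :=
  ⟨0, by rwa [zero_add, pow_one]⟩

lemma PreservesNonneg.mem_reachableFrom_of_mem (hT : PreservesNonneg T) {i j k : ι}
    (hj : j ∈ reachableFrom T i) (hk : 0 < T (basisVec p j) k) : k ∈ reachableFrom T i := by
  obtain ⟨n, hn⟩ := hj
  refine ⟨n + 1, (mul_pos hn hk).trans_le ?_⟩
  rw [pow_succ' T (n + 1), mul_apply_eq_comp]
  exact hT.mul_apply_basisVec_le ((hT.pow (n + 1)) _ (basisVec_nonneg i)) j k

lemma PreservesNonneg.notMem_reachableFrom_self (hT : PreservesNonneg T)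
    (hq : Tendsto (fun n : ℕ => ‖T ^ n‖ ^ (1 / (n : ℝ))) atTop (𝓝 0)) (i : ι) :
    i ∉ reachableFrom T i := fun ⟨n, hn⟩ =>
  hn.ne' (hT.pow_apply_basisVec_self_eq_zero hq i n.succ_pos)

/-- Every positive quasinilpotent bounded operator on `ℓᵖ` (`1 ≤ p < ∞`) has a
nontrivial closed invariant subspace, in fact a nontrivial closed invariant ideal. -/
theorem positive_quasinilpotent_invariant_ideal
    (p : ℝ≥0∞) [Fact (1 ≤ p)] (hp : p ≠ ∞)
    (T : lp (fun _ : ℕ => ℝ) p →L[ℝ] lp (fun _ : ℕ => ℝ) p)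
    (hpos : ∀ x : lp (fun _ : ℕ => ℝ) p, (∀ i, 0 ≤ x i) → ∀ i, 0 ≤ T x i)
    (hq : Tendsto (fun n : ℕ => ‖T ^ n‖ ^ (1 / (n : ℝ))) atTop (nhds 0)) :
    ∃ J : Submodule ℝ (lp (fun _ : ℕ => ℝ) p),
      IsClosed (J : Set (lp (fun _ : ℕ => ℝ) p)) ∧ J ≠ ⊥ ∧ J ≠ ⊤ ∧
      (∀ x ∈ J, T x ∈ J) ∧
      (∀ x ∈ J, ∀ y : lp (fun _ : ℕ => ℝ) p, (∀ i, |y i| ≤ |x i|) → y ∈ J) := by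
  have hT : PreservesNonneg T := hpos
  obtain ⟨S, i, k, hi, hk, hS⟩ : ∃ (S : Set ℕ) (i k : ℕ), i ∈ S ∧ k ∉ S ∧
      ∀ j ∈ S, ∀ k, 0 < T (basisVec p j) k → k ∈ S := by
    by_cases h : (reachableFrom T 0).Nonempty
    · obtain ⟨j, hj⟩ := h
      exact ⟨_, j, 0, hj, hT.notMem_reachableFrom_self hq 0,
        fun _ hj _ hk => hT.mem_reachableFrom_of_mem hj hk⟩
    · refine ⟨{0}, 0, 1, rfl, one_ne_zero, ?_⟩
      rintro _ rfl k hk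
      exact absurd ⟨k, mem_reachableFrom_of_pos hk⟩ h
  exact ⟨lpSupported p S, isClosed_lpSupported S, lpSupported_ne_bot hi, lpSupported_ne_top hk,
    fun _ hx => hT.apply_mem_lpSupported hp hS hx, fun _ hx _ hy => mem_lpSupported_of_abs_le hx hy⟩
end

section
/- Let S be a positive bounded linear operator on the real Banach space ℓ¹ (i.e. x_i ≥ 0 for all i implies (Sx)_i ≥ 0 for all i). Suppose that (S f_i)_{i+1} > 0 for every i ≥ 0, and that (S f_i)_0 > 0 for infinitely many i. Then S has no nontrivial closed invariant ideal: the only closed solid subspaces J of ℓ¹ with S(J) ⊆ J are {0} and ℓ¹. -/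
/-- A positive operator `S` on `ℓ¹` whose matrix has strictly positive entries on the
subdiagonal (`(S fᵢ)_{i+1} > 0` for all `i`) and strictly positive entries in the zeroth
row for infinitely many columns has no nontrivial closed invariant ideal. -/
theorem positive_operator_with_path_structure_no_invariant_ideal
    (S : lp (fun _ : ℕ => ℝ) 1 →L[ℝ] lp (fun _ : ℕ => ℝ) 1)
    (hpos : ∀ x : lp (fun _ : ℕ => ℝ) 1, (∀ i, 0 ≤ x i) → ∀ i, 0 ≤ S x i)
    (hsub : ∀ i : ℕ, 0 < S (lp.single 1 i 1) (i + 1))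
    (htop : {i : ℕ | 0 < S (lp.single 1 i 1) 0}.Infinite) :
    ∀ J : Submodule ℝ (lp (fun _ : ℕ => ℝ) 1),
      IsClosed (J : Set (lp (fun _ : ℕ => ℝ) 1)) →
      (∀ x ∈ J, ∀ y : lp (fun _ : ℕ => ℝ) 1, (∀ i, |y i| ≤ |x i|) → y ∈ J) →
      (∀ x ∈ J, S x ∈ J) →
      J = ⊥ ∨ J = ⊤ := by
  intro J hclosed hsolid hinv
  by_cases hbot : J = ⊥
  · exact Or.inl hbot
  right
  -- get a nonzero element of J
  obtain ⟨x, hxJ, hx0⟩ : ∃ x ∈ J, x ≠ 0 := by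
    by_contra h
    push_neg at h
    exact hbot (le_antisymm (fun x hx => h x hx) bot_le)
  obtain ⟨k, hk⟩ : ∃ k, x k ≠ 0 := by
    by_contra h
    push_neg at h
    apply hx0
    ext i
    simp [h i]
  -- key step lemma: if e_k ∈ J and (S e_k)_m > 0 then e_m ∈ J
  have key : ∀ k, lp.single 1 k (1 : ℝ) ∈ J → ∀ m, 0 < S (lp.single 1 k 1) m →
      lp.single 1 m (1 : ℝ) ∈ J := by
    intro k hkJ m hm
    have hy : lp.single 1 m (S (lp.single 1 k 1) m) ∈ J := by
      refine hsolid _ (hinv _ hkJ) _ ?_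
      intro i
      by_cases hi : i = m
      · subst hi; rw [lp.single_apply_self]
      · rw [lp.single_apply_ne _ _ _ hi]; simp [abs_nonneg]
    have := J.smul_mem (S (lp.single 1 k 1) m)⁻¹ hy
    rwa [← lp.single_smul, smul_eq_mul, inv_mul_cancel₀ hm.ne'] at this
  -- e_k ∈ J
  have hek : lp.single 1 k (1 : ℝ) ∈ J := by
    have hy : lp.single 1 k (x k) ∈ J := by
      refine hsolid _ hxJ _ ?_
      intro i
      by_cases hi : i = k
      · subst hi; rw [lp.single_apply_self]
      · rw [lp.single_apply_ne _ _ _ hi]; simp [abs_nonneg]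
    have := J.smul_mem (x k)⁻¹ hy
    rwa [← lp.single_smul, smul_eq_mul, inv_mul_cancel₀ hk] at this
  -- all e_j for j ≥ k
  have hchain : ∀ j, lp.single 1 (k + j) (1 : ℝ) ∈ J := by
    intro j
    induction j with
    | zero => exact hek
    | succ n ih => exact key _ ih _ (hsub (k + n))
  -- e_0 ∈ J
  have he0 : lp.single 1 0 (1 : ℝ) ∈ J := by
    obtain ⟨i, hi, hik⟩ := htop.exists_gt k
    have : lp.single 1 i (1 : ℝ) ∈ J := by
      obtain ⟨j, rfl⟩ := Nat.exists_eq_add_of_le hik.le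
      exact hchain j
    exact key _ this _ hi
  -- all e_j ∈ J
  have hall : ∀ j : ℕ, lp.single 1 j (1 : ℝ) ∈ J := by
    intro j
    induction j with
    | zero => exact he0
    | succ n ih => exact key _ ih _ (hsub n)
  -- all scaled singles ∈ J
  have hall' : ∀ (j : ℕ) (c : ℝ), lp.single 1 j c ∈ J := by
    intro j c
    have h1 : c = c • (1:ℝ) := by simp
    rw [h1, lp.single_smul]
    exact J.smul_mem c (hall j)
  -- density
  rw [eq_top_iff]
  intro f _
  have hsum := lp.hasSum_single (by norm_num : (1 : ENNReal) ≠ ⊤) f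
  have : f ∈ closure (J : Set (lp (fun _ : ℕ => ℝ) 1)) := by
    refine mem_closure_of_tendsto hsum.tendsto_sum_nat ?_
    filter_upwards with n
    exact J.sum_mem fun i _ => hall' i (f i)
  rwa [hclosed.closure_eq] at this
end
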